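/- Constantin–E–Titi commutator identity: for locally integrable functions f, g on ℝ^d and a mollifier η_ε, one has (fg)^ε(x) − f^ε(x) g^ε(x) = ∫ η_ε(y)[f(x−y)−f(x)][g(x−y)−g(x)] dy − (f(x)−f^ε(x))(g(x)−g^ε(x)) for almost every x. -/

import Mathlib

open MeasureTheory Filter Topology
open scoped ENNReal NNReal FourierTransform

noncomputable section

abbrev Ed (d : ℕ) := EuclideanSpace ℝ (Fin d)

/-- Homogeneous Littlewood–Paley block `Δ̇_j f = 2^{jd} ∫ h(2^j y) f(x−y) dy`. -/
def LPblock {d : ℕ} (h : Ed d → ℝ) (j : ℤ) (f : Ed d → ℝ) (x : Ed d) : ℝ :=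
  (2 : ℝ) ^ ((d : ℤ) * j) * ∫ y, h ((2 : ℝ) ^ j • y) * f (x - y)

/-- `h` is the kernel of a homogeneous dyadic partition of unity: its Fourier transform is
supported in the annulus `3/4 ≤ |ξ| ≤ 8/3` and the dilates sum to 1 away from the origin. -/
def IsLPkernel {d : ℕ} (h : Ed d → ℝ) : Prop :=
  Integrable h volume ∧
  (∀ ξ : Ed d, (‖ξ‖ < 3 / 4 ∨ 8 / 3 < ‖ξ‖) → 𝓕 (fun x => (h x : ℂ)) ξ = 0) ∧
  (∀ ξ : Ed d, ξ ≠ 0 →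
    HasSum (fun j : ℤ => 𝓕 (fun x => (h x : ℂ)) ((2 : ℝ) ^ (-j) • ξ)) 1)

/-- Homogeneous Besov seminorm `‖f‖_{Ḃ^α_{q,∞}} = sup_j 2^{jα} ‖Δ̇_j f‖_{L^q}`. -/
def besov {d : ℕ} (α : ℝ) (q : ℝ≥0∞) (h : Ed d → ℝ) (f : Ed d → ℝ) : ℝ≥0∞ :=
  ⨆ j : ℤ, (2 : ℝ≥0∞) ^ ((j : ℝ) * α) * eLpNorm (LPblock h j f) q volume

/-- The `c(ℕ)` condition: `2^{jα} ‖Δ̇_j f‖_{L^q} → 0` as `j → ∞`. -/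
def besovTail {d : ℕ} (α : ℝ) (q : ℝ≥0∞) (h : Ed d → ℝ) (f : Ed d → ℝ) : Prop :=
  Tendsto (fun j : ℤ => (2 : ℝ≥0∞) ^ ((j : ℝ) * α) * eLpNorm (LPblock h j f) q volume)
    atTop (𝓝 0)

/-- Nonhomogeneous Besov norm `‖f‖_{B^α_{q,∞}} = ‖f‖_{L^q} + ‖f‖_{Ḃ^α_{q,∞}}`. -/
def besovN {d : ℕ} (α : ℝ) (q : ℝ≥0∞) (h : Ed d → ℝ) (f : Ed d → ℝ) : ℝ≥0∞ :=
  eLpNorm f q volume + besov α q h f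

/-- A standard mollifier: smooth, nonnegative, radial, supported in the unit ball, integral one. -/
def IsMollifier {d : ℕ} (η : Ed d → ℝ) : Prop :=
  ContDiff ℝ (⊤ : ℕ∞) η ∧ (∀ x, 0 ≤ η x) ∧ (∀ x : Ed d, 1 ≤ ‖x‖ → η x = 0) ∧
  (∫ x, η x = 1) ∧ (∀ x y : Ed d, ‖x‖ = ‖y‖ → η x = η y)

/-- Mollification `f^ε = f * η_ε` with `η_ε(y) = ε^{-d} η(y/ε)`. -/
def mollify {d : ℕ} (η : Ed d → ℝ) (ε : ℝ) (f : Ed d → ℝ) (x : Ed d) : ℝ :=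
  ∫ y, (ε ^ d)⁻¹ * η (ε⁻¹ • y) * f (x - y)

/-- The low-frequency cut-off `S_N f(x) = 2^{2N} ∫ h̃(2^N y) f(x−y) dy` on `ℝ²`. -/
def SN (ht : Ed 2 → ℝ) (N : ℕ) (f : Ed 2 → ℝ) (x : Ed 2) : ℝ :=
  (2 : ℝ) ^ (2 * N) * ∫ y, ht ((2 : ℝ) ^ N • y) * f (x - y)

/-- The `L^r(0,T)` norm (in `ℝ≥0∞`) of a time-dependent quantity `F`. -/
def timeLp (T : ℝ) (r : ℝ≥0∞) (F : ℝ → ℝ≥0∞) : ℝ≥0∞ :=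
  if r = ∞ then essSup F (volume.restrict (Set.Ioo 0 T))
  else (∫⁻ t in Set.Ioo 0 T, F t ^ r.toReal) ^ (1 / r.toReal)

/-- The velocity `v = R^⊥ Λ^{γ−1} θ`, i.e. the Fourier multiplier with symbol
`(i ξ₂ |ξ|^{γ−2}, −i ξ₁ |ξ|^{γ−2})`. -/
def sqgVel (γ : ℝ) (θ : Ed 2 → ℝ) (i : Fin 2) (x : Ed 2) : ℝ :=
  (𝓕⁻ (fun ξ : Ed 2 =>
      Complex.I * ((if i = 0 then (ξ 1 : ℝ) else -(ξ 0 : ℝ)) : ℂ) *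
        ((‖ξ‖ ^ (γ - 2) : ℝ) : ℂ) * 𝓕 (fun z => (θ z : ℂ)) ξ) x).re

/-- `θ` is a weak solution of `∂_t θ + v·∇θ = 0`, `v = R^⊥Λ^{γ−1}θ`, on `[0,T]`. -/
def IsWeakSolutionGSQG (γ T : ℝ) (θ : ℝ → Ed 2 → ℝ) : Prop :=
  ∀ φ : ℝ → Ed 2 → ℝ,
    ContDiff ℝ (⊤ : ℕ∞) (fun q : ℝ × Ed 2 => φ q.1 q.2) →
    HasCompactSupport (fun q : ℝ × Ed 2 => φ q.1 q.2) →
    ∀ t ∈ Set.Icc 0 T,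
      (∫ x, (θ t x * φ t x - θ 0 x * φ 0 x)) =
        ∫ s in Set.Ioc 0 t, ∫ x, θ s x *
          (deriv (fun τ => φ τ x) s +
            ∑ i : Fin 2, sqgVel γ (θ s) i x * fderiv ℝ (φ s) x (EuclideanSpace.single i 1))

/-- `θ ∈ C([0,T]; L^p)`. -/
def ContinuousLp {d : ℕ} (p : ℝ≥0∞) (T : ℝ) (θ : ℝ → Ed d → ℝ) : Prop :=
  (∀ t ∈ Set.Icc 0 T, MemLp (θ t) p volume) ∧
  ∀ t ∈ Set.Icc 0 T,
    Tendsto (fun s => eLpNorm (fun x => θ s x - θ t x) p volume)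
      (𝓝[Set.Icc 0 T] t) (𝓝 0)

/-- The low-frequency cut-off on `ℝ^d`: `S_N f(x) = 2^{Nd} ∫ h̃(2^N y) f(x−y) dy`. -/
def SNd {d : ℕ} (ht : Ed d → ℝ) (N : ℕ) (f : Ed d → ℝ) (x : Ed d) : ℝ :=
  (2 : ℝ) ^ ((d : ℤ) * N) * ∫ y, ht ((2 : ℝ) ^ N • y) * f (x - y)

end

theorem constantin_e_titi_identity {d : ℕ} (hd : 0 < d) (η : Ed d → ℝ)
    (hη : IsMollifier η) (f g : Ed d → ℝ)
    (hf : MeasureTheory.LocallyIntegrable f volume)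
    (hg : MeasureTheory.LocallyIntegrable g volume)
    (hfg : MeasureTheory.LocallyIntegrable (fun x => f x * g x) volume)
    (ε : ℝ) (hε : 0 < ε) :
    ∀ᵐ x : Ed d ∂volume,
      mollify η ε (fun z => f z * g z) x - mollify η ε f x * mollify η ε g x =
        (∫ y, (ε ^ d)⁻¹ * η (ε⁻¹ • y) * ((f (x - y) - f x) * (g (x - y) - g x))) -
          (f x - mollify η ε f x) * (g x - mollify η ε g x) := by
  obtain ⟨hηs, hηnn, hηsupp, hηint, -⟩ := hη
  set φ : Ed d → ℝ := fun y => (ε ^ d)⁻¹ * η (ε⁻¹ • y) with hφdef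
  have hφc : Continuous φ :=
    continuous_const.mul (hηs.continuous.comp (continuous_const_smul _))
  have hφs : HasCompactSupport φ := by
    apply HasCompactSupport.intro (isCompact_closedBall (0 : Ed d) ε)
    intro y hy
    simp only [Metric.mem_closedBall, dist_zero_right, not_le] at hy
    have h1 : (1 : ℝ) ≤ ‖ε⁻¹ • y‖ := by
      rw [norm_smul, Real.norm_eq_abs, abs_of_nonneg (inv_nonneg.2 hε.le),
        ← inv_mul_cancel₀ hε.ne']
      exact mul_le_mul_of_nonneg_left hy.le (inv_nonneg.2 hε.le)
    simp [hφdef, hηsupp _ h1]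
  have key : ∀ u : Ed d → ℝ, MeasureTheory.LocallyIntegrable u volume →
      ∀ x, Integrable (fun y => φ y * u (x - y)) volume := fun u hu x =>
    hφs.convolutionExists_left (ContinuousLinearMap.mul ℝ ℝ) hφc hu x
  have hφint : ∫ y, φ y = 1 := by
    rw [hφdef]
    rw [MeasureTheory.integral_const_mul]
    rw [MeasureTheory.Measure.integral_comp_smul_of_nonneg volume η ε⁻¹
      (hR := inv_nonneg.2 hε.le)]
    rw [finrank_euclideanSpace_fin, smul_eq_mul, hηint]
    field_simp
    rw [one_div_pow, mul_one_div_cancel (pow_ne_zero _ hε.ne')]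
  have hφI : Integrable φ volume := hφc.integrable_of_hasCompactSupport hφs
  refine Filter.Eventually.of_forall fun x => ?_
  have hA := key _ hfg x
  have hB := key _ hf x
  have hC := key _ hg x
  have hmf : mollify η ε f x = ∫ y, φ y * f (x - y) := rfl
  have hmg : mollify η ε g x = ∫ y, φ y * g (x - y) := rfl
  have hmfg : mollify η ε (fun z => f z * g z) x = ∫ y, φ y * (f (x - y) * g (x - y)) := by
    simp only [mollify, hφdef, mul_assoc]
  have hI : (∫ y, (ε ^ d)⁻¹ * η (ε⁻¹ • y) * ((f (x - y) - f x) * (g (x - y) - g x))) =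
      (∫ y, φ y * (f (x - y) * g (x - y))) - g x * (∫ y, φ y * f (x - y)) -
        f x * (∫ y, φ y * g (x - y)) + f x * g x * (∫ y, φ y) := by
    calc (∫ y, (ε ^ d)⁻¹ * η (ε⁻¹ • y) * ((f (x - y) - f x) * (g (x - y) - g x)))
        = ∫ y, (φ y * (f (x - y) * g (x - y)) - g x * (φ y * f (x - y)) -
            f x * (φ y * g (x - y))) + f x * g x * φ y := by
          congr 1
          funext y
          simp only [hφdef]
          ring
      _ = (∫ y, φ y * (f (x - y) * g (x - y)) - g x * (φ y * f (x - y)) -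
            f x * (φ y * g (x - y))) + ∫ y, f x * g x * φ y :=
          MeasureTheory.integral_add ((hA.sub (hB.const_mul _)).sub (hC.const_mul _))
            (hφI.const_mul _)
      _ = ((∫ y, φ y * (f (x - y) * g (x - y)) - g x * (φ y * f (x - y))) -
            ∫ y, f x * (φ y * g (x - y))) + ∫ y, f x * g x * φ y := by
          congr 1
          exact MeasureTheory.integral_sub (hA.sub (hB.const_mul _)) (hC.const_mul _)
      _ = (((∫ y, φ y * (f (x - y) * g (x - y))) - ∫ y, g x * (φ y * f (x - y))) -
            ∫ y, f x * (φ y * g (x - y))) + ∫ y, f x * g x * φ y := by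
          congr 2
          exact MeasureTheory.integral_sub hA (hB.const_mul _)
      _ = (∫ y, φ y * (f (x - y) * g (x - y))) - g x * (∫ y, φ y * f (x - y)) -
            f x * (∫ y, φ y * g (x - y)) + f x * g x * (∫ y, φ y) := by
          rw [MeasureTheory.integral_const_mul, MeasureTheory.integral_const_mul,
            MeasureTheory.integral_const_mul]
  rw [hmf, hmg, hmfg, hI, hφint]
  ring
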